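/- Let F be a field and consider f = diag(u, 1, u^{-1}) in SL_3(F[u, u^{-1}]). If m, n >= 3 and k = s f s^{-1} with s as specified, and if g1 = f^m, g2 = k^n generate a free group of rank 2 in SL_3(Q(t)), then in particular no nontrivial reduced word in f^m and k^n equals the identity matrix; equivalently, the subgroup <f^m, k^n> of SL_3(Q(t)) is isomorphic to the free group F_2. -/

import Mathlib

/-!
Ping-pong on `ℚ(t)³`, measuring entries by the valuation at infinity (the degree in `t`).
Let `A` be the vectors whose first or last entry exceeds the other two in degree by at least
two, and `T` the vectors whose degrees look like `(μ, ≤ μ, μ - 1)` or its reverse; `A` and `T`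
are disjoint. Because `s` has entries of degree `0` except the `t⁻¹` in the corners, both `s`
and `s⁻¹` (which is `s` with its rows reversed, up to a scalar of degree `0`) map `A` into `T`,
while `f^e` with `|e| ≥ 3` shifts the outer degrees of a vector of `T` far enough apart to land
in `A`. So every nonzero power of `fᵐ` maps `s • A ⊆ T` into `A`, and every nonzero power of
`kⁿ = s fⁿ s⁻¹` maps `A` into `s • A`.
-/

open RatFunc

/-- `f = diag(t, 1, t⁻¹)` over `ℚ(t)`. -/
noncomputable def fmat : Matrix (Fin 3) (Fin 3) (RatFunc ℚ) :=
  !![X, 0, 0; 0, 1, 0; 0, 0, X⁻¹]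

/-- The conjugating matrix `s`, so that `k = s f s⁻¹`. -/
noncomputable def smat : Matrix (Fin 3) (Fin 3) (RatFunc ℚ) :=
  !![1, 1, X⁻¹;
     -(X⁻¹ ^ 2 + 1), -(X⁻¹ + 1), -(X⁻¹ ^ 2 + 1);
     X⁻¹, 1, 1]

open Function Pointwise WithZero

theorem FreeGroup.injective_lift_of_ping_pong_zpow {ι G α : Type*} [Nontrivial ι] [Group G]
    [MulAction G α] (a : ι → G) (X : ι → Set α) (hne : ∀ i, (X i).Nonempty)
    (hdisj : Pairwise (Disjoint on X))
    (hpp : Pairwise fun i j => ∀ k : ℤ, k ≠ 0 → a i ^ k • X j ⊆ X i) :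
    Injective (FreeGroup.lift a) := by
  have hfac : FreeGroup.lift a =
      (Monoid.CoprodI.lift fun i => FreeGroup.lift fun _ => a i).comp
        freeGroupEquivCoprodI.toMonoidHom := by
    ext i
    simp
  rw [hfac, MonoidHom.coe_comp]
  refine Injective.comp ?_ freeGroupEquivCoprodI.injective
  refine Monoid.CoprodI.lift_injective_of_ping_pong _ ?_ X hne hdisj ?_
  · inhabit ι
    refine Or.inr ⟨default, ?_⟩
    rw [FreeGroup.freeGroupUnitEquivInt.cardinal_eq, Cardinal.mk_int]
    exact Cardinal.natCast_lt_aleph0.le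
  · intro i j hij
    refine FreeGroup.freeGroupUnitEquivInt.forall_congr_left.mpr fun k hne => ?_
    have hk : k ≠ 0 := by
      rintro rfl
      exact hne (by simp [FreeGroup.freeGroupUnitEquivInt])
    simpa [FreeGroup.freeGroupUnitEquivInt] using hpp hij k hk

theorem FreeGroup.injective_lift_conj_of_ping_pong {G α : Type*} [Group G] [MulAction G α]
    {a b s : G} {A T : Set α} (hA : A.Nonempty) (hAT : Disjoint A T) (hs : s • A ⊆ T)
    (hs' : s⁻¹ • A ⊆ T) (ha : ∀ k : ℤ, k ≠ 0 → a ^ k • T ⊆ A)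
    (hb : ∀ k : ℤ, k ≠ 0 → b ^ k • T ⊆ A) :
    Injective (FreeGroup.lift ![a, s * b * s⁻¹]) := by
  have hdisj : Disjoint A (s • A) := hAT.mono_right hs
  refine FreeGroup.injective_lift_of_ping_pong_zpow _ ![A, s • A] ?_ ?_ ?_
  · intro i
    fin_cases i
    exacts [hA, hA.smul_set]
  · intro i j hij
    fin_cases i <;> fin_cases j
    exacts [absurd rfl hij, hdisj, hdisj.symm, absurd rfl hij]
  · intro i j hij k hk
    fin_cases i <;> fin_cases j
    · exact absurd rfl hij
    · exact (Set.smul_set_mono hs).trans (ha k hk)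
    · show (s * b * s⁻¹) ^ k • A ⊆ s • A
      rw [conj_zpow, mul_smul, mul_smul]
      exact Set.smul_set_mono ((Set.smul_set_mono hs').trans (hb k hk))
    · exact absurd rfl hij

section ValuedField

variable {K : Type*} [Field K] {v : Valuation K ℤᵐ⁰} {t a b c : K}

def Dominates (v : Valuation K ℤᵐ⁰) (a b c : K) : Prop :=
  ∃ μ : ℤ, v a = exp μ ∧ v b ≤ exp (μ - 2) ∧ v c ≤ exp (μ - 2)

def HasProfile (v : Valuation K ℤᵐ⁰) (a b c : K) : Prop :=
  ∃ μ : ℤ, v a = exp μ ∧ v b ≤ exp μ ∧ v c = exp (μ - 1)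

theorem Valuation.map_zpow_mul_of_eq_exp_one (ht : v t = exp 1) (e : ℤ) (a : K) :
    v (t ^ e * a) = exp e * v a := by
  rw [map_mul, map_zpow₀, ht, ← exp_zsmul, smul_eq_mul, mul_one]

theorem Valuation.map_inv_pow_add_one (ht : v t = exp 1) {k : ℕ} (hk : 0 < k) :
    v (t⁻¹ ^ k + 1) = 1 := by
  rw [add_comm]
  refine v.map_one_add_of_lt ?_
  rw [map_pow, map_inv₀, ht, ← exp_neg, ← exp_nsmul, ← exp_zero, exp_lt_exp]
  simpa using hk

theorem Valuation.map_add_eq_exp {x y : K} {μ : ℤ} (hx : v x = exp μ) (hy : v y < exp μ) :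
    v (x + y) = exp μ := by
  rw [v.map_add_eq_of_lt_left (hx ▸ hy), hx]

namespace HasProfile

variable {e : ℤ}

theorem dominates_of_three_le (h : HasProfile v a b c) (ht : v t = exp 1) (he : 3 ≤ e) :
    Dominates v (t ^ e * a) b (t ^ (-e) * c) := by
  obtain ⟨μ, ha, hb, hc⟩ := h
  refine ⟨e + μ, ?_, hb.trans (exp_le_exp.2 (by omega)), ?_⟩
  · rw [v.map_zpow_mul_of_eq_exp_one ht, ha, exp_add]
  · rw [v.map_zpow_mul_of_eq_exp_one ht, hc, ← exp_add, exp_le_exp]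
    omega

theorem dominates_of_le_neg_three (h : HasProfile v a b c) (ht : v t = exp 1) (he : e ≤ -3) :
    Dominates v (t ^ (-e) * c) b (t ^ e * a) := by
  obtain ⟨μ, ha, hb, hc⟩ := h
  refine ⟨-e + (μ - 1), ?_, hb.trans (exp_le_exp.2 (by omega)), ?_⟩
  · rw [v.map_zpow_mul_of_eq_exp_one ht, hc, exp_add]
  · rw [v.map_zpow_mul_of_eq_exp_one ht, ha, ← exp_add, exp_le_exp]
    omega

theorem not_dominates (h : HasProfile v a b c) : ¬ Dominates v a b c := by
  rintro ⟨ν, ha', -, hc'⟩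
  obtain ⟨μ, ha, -, hc⟩ := h
  rw [ha, exp_inj] at ha'
  rw [hc, exp_le_exp] at hc'
  omega

theorem not_dominates_swap (h : HasProfile v a b c) : ¬ Dominates v c b a := by
  rintro ⟨ν, hc', -, ha'⟩
  obtain ⟨μ, ha, -, hc⟩ := h
  rw [hc, exp_inj] at hc'
  rw [ha, exp_le_exp] at ha'
  omega

theorem mul_left (h : HasProfile v a b c) {u : K} (hu : v u = 1) :
    HasProfile v (u * a) (u * b) (u * c) := by
  obtain ⟨μ, ha, hb, hc⟩ := h
  exact ⟨μ, by rw [map_mul, hu, one_mul, ha], by rwa [map_mul, hu, one_mul],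
    by rw [map_mul, hu, one_mul, hc]⟩

end HasProfile

theorem Dominates.hasProfile (h : Dominates v a b c) (ht : v t = exp 1) :
    HasProfile v (a + b + t⁻¹ * c)
      (-((t⁻¹ ^ 2 + 1) * a + (t⁻¹ + 1) * b + (t⁻¹ ^ 2 + 1) * c)) (t⁻¹ * a + b + c) := by
  obtain ⟨μ, ha, hb, hc⟩ := h
  have hinv : ∀ {x : K} {k : ℤ}, v x ≤ exp k → v (t⁻¹ * x) ≤ exp (k - 1) := fun hx => by
    rw [map_mul, map_inv₀, ht, ← exp_neg, sub_eq_neg_add, exp_add]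
    gcongr
  have hunit : ∀ {u x : K} {k : ℤ}, v u = 1 → v x ≤ exp k → v (u * x) ≤ exp k :=
    fun hu hx => by rwa [map_mul, hu, one_mul]
  have hlt : ∀ {x : K} {k l : ℤ}, v x ≤ exp k → k < l → v x < exp l :=
    fun hx hkl => hx.trans_lt (exp_lt_exp.2 hkl)
  have h₁ : v (t⁻¹ + 1) = 1 := by simpa using v.map_inv_pow_add_one ht one_pos
  have h₂ := v.map_inv_pow_add_one ht two_pos
  refine ⟨μ, ?_, ?_, ?_⟩
  · rw [v.map_add_eq_exp (v.map_add_eq_exp ha (hlt hb (by omega))) (hlt (hinv hc) (by omega))]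
  · rw [Valuation.map_neg]
    refine v.map_add_le (v.map_add_le (hunit h₂ ha.le) (hunit h₁ (hb.trans ?_)))
      (hunit h₂ (hc.trans ?_)) <;> exact exp_le_exp.2 (by omega)
  · have ha' : v (t⁻¹ * a) = exp (μ - 1) := by
      rw [map_mul, map_inv₀, ht, ha, ← exp_neg, ← exp_add, neg_add_eq_sub]
    rw [v.map_add_eq_exp (v.map_add_eq_exp ha' (hlt hb (by omega))) (hlt hc (by omega))]

def dominantSet (v : Valuation K ℤᵐ⁰) : Set (Fin 3 → K) :=
  {x | Dominates v (x 0) (x 1) (x 2) ∨ Dominates v (x 2) (x 1) (x 0)}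

def profileSet (v : Valuation K ℤᵐ⁰) : Set (Fin 3 → K) :=
  {x | HasProfile v (x 0) (x 1) (x 2) ∨ HasProfile v (x 2) (x 1) (x 0)}

theorem dominantSet_nonempty : (dominantSet v).Nonempty :=
  ⟨![1, 0, 0], Or.inl ⟨0, by simp, by simp, by simp⟩⟩

theorem disjoint_dominantSet_profileSet : Disjoint (dominantSet v) (profileSet v) := by
  rw [Set.disjoint_left]
  rintro x (hx | hx) (hp | hp)
  exacts [hp.not_dominates hx, hp.not_dominates_swap hx, hp.not_dominates_swap hx,
    hp.not_dominates hx]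

theorem diag_zpow_mem_dominantSet (ht : v t = exp 1) {x : Fin 3 → K} (hx : x ∈ profileSet v)
    {e : ℤ} (he : 3 ≤ |e|) : ![t ^ e * x 0, x 1, t ^ (-e) * x 2] ∈ dominantSet v := by
  rcases le_abs'.1 he with he | he <;> rcases hx with hx | hx
  · exact Or.inr (hx.dominates_of_le_neg_three ht he)
  · have h := hx.dominates_of_three_le ht (e := -e) (by omega)
    rw [neg_neg] at h
    exact Or.inr h
  · exact Or.inl (hx.dominates_of_three_le ht he)
  · have h := hx.dominates_of_le_neg_three ht (e := -e) (by omega)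
    rw [neg_neg] at h
    exact Or.inl h

theorem rev_mul_mem_profileSet {y : Fin 3 → K} (hy : y ∈ profileSet v) {u : K} (hu : v u = 1) :
    ![u * y 2, u * y 1, u * y 0] ∈ profileSet v := by
  rcases hy with hy | hy
  exacts [Or.inr (hy.mul_left hu), Or.inl (hy.mul_left hu)]

end ValuedField

section Burau

open scoped Classical

local notation "v∞" => inftyValuation ℚ

theorem inftyValuation_one_sub_X_inv : v∞ (1 - X⁻¹) = 1 := by
  refine Valuation.map_one_sub_of_lt _ ?_
  rw [map_inv₀, inftyValuation.X, ← WithZero.exp_neg, ← exp_zero, exp_lt_exp]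
  omega

theorem one_sub_X_inv_ne_zero : (1 - X⁻¹ : RatFunc ℚ) ≠ 0 := by
  rw [← v∞.ne_zero_iff, inftyValuation_one_sub_X_inv]
  exact one_ne_zero

noncomputable def smatInv : Matrix (Fin 3) (Fin 3) (RatFunc ℚ) :=
  (-((1 - X⁻¹) ^ 2)⁻¹ : RatFunc ℚ) •
    !![X⁻¹, 1, 1; -(X⁻¹ ^ 2 + 1), -(X⁻¹ + 1), -(X⁻¹ ^ 2 + 1); 1, 1, X⁻¹]

theorem smat_mul_smatInv : smat * smatInv = 1 := by
  have hrev : smat * !![X⁻¹, 1, 1; -(X⁻¹ ^ 2 + 1), -(X⁻¹ + 1), -(X⁻¹ ^ 2 + 1); 1, 1, X⁻¹] =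
      (-(1 - X⁻¹) ^ 2 : RatFunc ℚ) • 1 := by
    ext i j
    fin_cases i <;> fin_cases j <;> simp [smat, Matrix.mul_apply, Fin.sum_univ_three] <;> ring
  rw [smatInv, Matrix.mul_smul, hrev, smul_smul, neg_mul_neg,
    inv_mul_cancel₀ (pow_ne_zero 2 one_sub_X_inv_ne_zero), one_smul]

noncomputable def smatGL : GL (Fin 3) (RatFunc ℚ) :=
  ⟨smat, smatInv, smat_mul_smatInv, mul_eq_one_comm.mp smat_mul_smatInv⟩

theorem smatGL_smul (x : Fin 3 → RatFunc ℚ) :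
    smatGL • x = ![x 0 + x 1 + X⁻¹ * x 2,
      -((X⁻¹ ^ 2 + 1) * x 0 + (X⁻¹ + 1) * x 1 + (X⁻¹ ^ 2 + 1) * x 2),
      X⁻¹ * x 0 + x 1 + x 2] := by
  ext i
  fin_cases i <;> simp [Units.smul_def, smatGL, smat, Matrix.mulVec, dotProduct,
    Fin.sum_univ_three]
  ring

theorem smatGL_inv_smul (x : Fin 3 → RatFunc ℚ) :
    smatGL⁻¹ • x = ![-((1 - X⁻¹) ^ 2)⁻¹ * (smatGL • x) 2, -((1 - X⁻¹) ^ 2)⁻¹ * (smatGL • x) 1,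
      -((1 - X⁻¹) ^ 2)⁻¹ * (smatGL • x) 0] := by
  rw [smatGL_smul]
  ext i
  fin_cases i <;> simp [Units.smul_def, smatGL, smatInv, Matrix.mulVec, dotProduct,
    Fin.sum_univ_three] <;> ring

theorem zpow_smul_of_val_eq_fmat {g : GL (Fin 3) (RatFunc ℚ)} (hg : (g : Matrix _ _ _) = fmat)
    (e : ℤ) (x : Fin 3 → RatFunc ℚ) : (g ^ e) • x = ![X ^ e * x 0, x 1, X ^ (-e) * x 2] := by
  have hX : (X : RatFunc ℚ) ≠ 0 := X_ne_zero
  have hg₁ : ∀ y : Fin 3 → RatFunc ℚ, g • y = ![X * y 0, y 1, X⁻¹ * y 2] := fun y => by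
    ext i
    fin_cases i <;> simp [Units.smul_def, hg, fmat, Matrix.mulVec, dotProduct, Fin.sum_univ_three]
  have hg₂ : ∀ y : Fin 3 → RatFunc ℚ, g⁻¹ • y = ![X⁻¹ * y 0, y 1, X * y 2] := fun y => by
    rw [inv_smul_eq_iff, hg₁]
    ext i
    fin_cases i <;> simp [hX]
  induction e using Int.induction_on generalizing x with
  | zero => ext i; fin_cases i <;> simp
  | succ e ih =>
    rw [zpow_add_one, mul_smul, hg₁, ih]
    ext i; fin_cases i <;> simp [zpow_add₀ hX] <;> ring
  | pred e ih =>
    rw [zpow_sub_one, mul_smul, hg₂, ih]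
    ext i; fin_cases i <;> simp [zpow_sub₀ hX, zpow_add₀ hX] <;> ring

theorem smatGL_smul_dominantSet_subset : smatGL • dominantSet v∞ ⊆ profileSet v∞ := by
  refine Set.smul_set_subset_iff.2 fun x hx => ?_
  rw [smatGL_smul]
  rcases hx with hx | hx
  · exact Or.inl (hx.hasProfile (inftyValuation.X ℚ))
  · refine Or.inr ?_
    convert hx.hasProfile (inftyValuation.X ℚ) using 1 <;> simp only [Matrix.cons_val] <;> ring

theorem smatGL_inv_smul_dominantSet_subset : smatGL⁻¹ • dominantSet v∞ ⊆ profileSet v∞ := by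
  refine Set.smul_set_subset_iff.2 fun x hx => ?_
  rw [smatGL_inv_smul]
  refine rev_mul_mem_profileSet (Set.smul_set_subset_iff.1 smatGL_smul_dominantSet_subset hx) ?_
  rw [Valuation.map_neg, map_inv₀, map_pow, inftyValuation_one_sub_X_inv, one_pow, inv_one]

theorem pow_zpow_smul_profileSet_subset {g : GL (Fin 3) (RatFunc ℚ)}
    (hg : (g : Matrix _ _ _) = fmat) {p : ℕ} (hp : 3 ≤ p) {k : ℤ} (hk : k ≠ 0) :
    (g ^ p) ^ k • profileSet v∞ ⊆ dominantSet v∞ := by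
  refine Set.smul_set_subset_iff.2 fun x hx => ?_
  rw [← zpow_natCast, ← zpow_mul, zpow_smul_of_val_eq_fmat hg]
  refine diag_zpow_mem_dominantSet (inftyValuation.X ℚ) hx ?_
  rw [abs_mul, Nat.abs_cast]
  nlinarith [Int.one_le_abs hk]

end Burau

/-- **Main theorem (Witzel–Zaremsky).** For `m, n ≥ 3`, the elements `fᵐ` and `kⁿ`
(with `k = s f s⁻¹`) of `SL₃(ℚ(t))` generate a free group of rank 2: the canonical
homomorphism from the free group on two generators sending them to `fᵐ` and `kⁿ` is
injective, i.e. no nontrivial reduced word in `fᵐ, kⁿ` is the identity. -/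
theorem free_subgroup_burau (F K : Matrix.SpecialLinearGroup (Fin 3) (RatFunc ℚ))
    (hF : (F : Matrix (Fin 3) (Fin 3) (RatFunc ℚ)) = fmat)
    (hK : (K : Matrix (Fin 3) (Fin 3) (RatFunc ℚ)) = smat * fmat * smat⁻¹)
    (m n : ℕ) (hm : 3 ≤ m) (hn : 3 ≤ n) :
    Function.Injective ⇑(FreeGroup.lift fun i : Fin 2 => if i = 0 then F ^ m else K ^ n) := by
  set f := Matrix.SpecialLinearGroup.toGL F
  have hf : (f : Matrix (Fin 3) (Fin 3) (RatFunc ℚ)) = fmat := hF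
  have hK' : Matrix.SpecialLinearGroup.toGL K = smatGL * f * smatGL⁻¹ :=
    Units.ext <| hK.trans <| by rw [Matrix.inv_eq_right_inv smat_mul_smatInv, ← hF]; rfl
  have hinj := FreeGroup.injective_lift_conj_of_ping_pong dominantSet_nonempty
    disjoint_dominantSet_profileSet smatGL_smul_dominantSet_subset
    smatGL_inv_smul_dominantSet_subset (fun _ => pow_zpow_smul_profileSet_subset hf hm)
    (fun _ => pow_zpow_smul_profileSet_subset hf hn)
  have hlift : Matrix.SpecialLinearGroup.toGL.comp
      (FreeGroup.lift fun i : Fin 2 => if i = 0 then F ^ m else K ^ n) =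
      FreeGroup.lift ![f ^ m, smatGL * f ^ n * smatGL⁻¹] := by
    ext i
    fin_cases i <;> simp [f, hK', conj_pow]
  refine Injective.of_comp (f := Matrix.SpecialLinearGroup.toGL) ?_
  rwa [← MonoidHom.coe_comp, hlift]
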